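/- s_ℝ(K) ≥ 2 (i.e., there exists an m×2 matrix over 𝔽₂ satisfying condition (A2) for K) if and only if condition (S2) holds: either (1) there exist pairwise distinct τ₁, τ₂, τ₃ ∈ N(K) with τ₁ ∩ τ₂ ∩ τ₃ = ∅, or (2) there exist distinct τ₁, τ₂ ∈ N(K) with τ₁ ∩ τ₂ = ∅. -/

import Mathlib

/-- `K` is an abstract simplicial complex on the vertex set `[m]`:
it contains the empty set and is closed under taking subsets. -/
def IsSimplicialComplex (m : ℕ) (K : Set (Finset (Fin m))) : Prop :=
  ∅ ∈ K ∧ ∀ σ ∈ K, ∀ τ ⊆ σ, τ ∈ K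

/-- `ω` is a minimal non-simplex of `K`: `ω ∉ K` but every proper subset of `ω` is in `K`. -/
def MinimalNonSimplex (m : ℕ) (K : Set (Finset (Fin m))) (ω : Finset (Fin m)) : Prop :=
  ω ∉ K ∧ ∀ τ ⊂ ω, τ ∈ K

/-- Condition (A): for every simplex `σ ∈ K` the rows `{Sⁱ : i ∉ σ}`
generate `ℤᵏ` as an abelian group. -/
def CondA (m k : ℕ) (K : Set (Finset (Fin m))) (S : Matrix (Fin m) (Fin k) ℤ) : Prop :=
  ∀ σ ∈ K, Submodule.span ℤ ((fun i => S i) '' {i : Fin m | i ∉ σ}) = ⊤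

/-- Condition (A2): for every simplex `σ ∈ K` the rows `{Sⁱ : i ∉ σ}` span `𝔽₂ᵏ`. -/
def CondA2 (m k : ℕ) (K : Set (Finset (Fin m))) (S : Matrix (Fin m) (Fin k) (ZMod 2)) : Prop :=
  ∀ σ ∈ K, Submodule.span (ZMod 2) ((fun i => S i) '' {i : Fin m | i ∉ σ}) = ⊤

/-- Condition (S2): `N(K)` contains two disjoint elements, or three pairwise distinct
elements with empty common intersection. -/
def CondS2 (m : ℕ) (K : Set (Finset (Fin m))) : Prop :=
  (∃ τ₁ τ₂ τ₃ : Finset (Fin m), MinimalNonSimplex m K τ₁ ∧ MinimalNonSimplex m K τ₂ ∧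
    MinimalNonSimplex m K τ₃ ∧ τ₁ ≠ τ₂ ∧ τ₁ ≠ τ₃ ∧ τ₂ ≠ τ₃ ∧ τ₁ ∩ τ₂ ∩ τ₃ = ∅) ∨
  (∃ τ₁ τ₂ : Finset (Fin m), MinimalNonSimplex m K τ₁ ∧ MinimalNonSimplex m K τ₂ ∧
    τ₁ ≠ τ₂ ∧ τ₁ ∩ τ₂ = ∅)

/-- Condition (S3): `N(K)` contains one of five configurations of pairwise distinct
elements described in Proposition (S3). -/
def CondS3 (m : ℕ) (K : Set (Finset (Fin m))) : Prop :=
  (∃ τ₁ τ₂ τ₃ τ₄ τ₅ τ₆ τ₇ : Finset (Fin m),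
    (∀ τ ∈ [τ₁, τ₂, τ₃, τ₄, τ₅, τ₆, τ₇], MinimalNonSimplex m K τ) ∧
    [τ₁, τ₂, τ₃, τ₄, τ₅, τ₆, τ₇].Pairwise (· ≠ ·) ∧
    τ₁ ∩ τ₂ ∩ τ₄ = ∅ ∧ τ₁ ∩ τ₃ ∩ τ₅ = ∅ ∧ τ₁ ∩ τ₆ ∩ τ₇ = ∅ ∧
    τ₂ ∩ τ₃ ∩ τ₆ = ∅ ∧ τ₂ ∩ τ₅ ∩ τ₇ = ∅ ∧ τ₃ ∩ τ₄ ∩ τ₇ = ∅ ∧ τ₄ ∩ τ₅ ∩ τ₆ = ∅) ∨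
  (∃ τ₁ τ₂ τ₃ τ₄ τ₅ τ₆ : Finset (Fin m),
    (∀ τ ∈ [τ₁, τ₂, τ₃, τ₄, τ₅, τ₆], MinimalNonSimplex m K τ) ∧
    [τ₁, τ₂, τ₃, τ₄, τ₅, τ₆].Pairwise (· ≠ ·) ∧
    τ₁ ∩ τ₃ = ∅ ∧ τ₁ ∩ τ₂ ∩ τ₄ = ∅ ∧ τ₁ ∩ τ₂ ∩ τ₅ = ∅ ∧
    τ₁ ∩ τ₄ ∩ τ₆ = ∅ ∧ τ₁ ∩ τ₅ ∩ τ₆ = ∅ ∧ τ₂ ∩ τ₃ ∩ τ₆ = ∅ ∧ τ₃ ∩ τ₄ ∩ τ₅ = ∅) ∨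
  (∃ τ₁ τ₂ τ₃ τ₄ τ₅ : Finset (Fin m),
    (∀ τ ∈ [τ₁, τ₂, τ₃, τ₄, τ₅], MinimalNonSimplex m K τ) ∧
    [τ₁, τ₂, τ₃, τ₄, τ₅].Pairwise (· ≠ ·) ∧
    τ₁ ∩ τ₂ = ∅ ∧ τ₁ ∩ τ₅ = ∅ ∧ τ₁ ∩ τ₃ ∩ τ₄ = ∅ ∧
    τ₂ ∩ τ₃ ∩ τ₅ = ∅ ∧ τ₂ ∩ τ₄ ∩ τ₅ = ∅) ∨
  (∃ τ₁ τ₂ τ₃ τ₄ : Finset (Fin m),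
    (∀ τ ∈ [τ₁, τ₂, τ₃, τ₄], MinimalNonSimplex m K τ) ∧
    [τ₁, τ₂, τ₃, τ₄].Pairwise (· ≠ ·) ∧
    τ₁ ∩ (τ₂ ∪ τ₃ ∪ τ₄) = ∅ ∧ τ₂ ∩ τ₃ ∩ τ₄ = ∅) ∨
  (∃ τ₁ τ₂ τ₃ : Finset (Fin m),
    (∀ τ ∈ [τ₁, τ₂, τ₃], MinimalNonSimplex m K τ) ∧
    [τ₁, τ₂, τ₃].Pairwise (· ≠ ·) ∧
    τ₁ ∩ τ₂ = ∅ ∧ τ₁ ∩ τ₃ = ∅ ∧ τ₂ ∩ τ₃ = ∅)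

/-! The three nonzero vectors of `𝔽₂²` drive the proof. Given (A2), for each nonzero `v` the
vertices whose row is neither `0` nor `v` form a non-simplex, because the remaining rows only span
`⟨v⟩`; these three non-simplices have no common vertex. Conversely, given non-simplices `τ v`
(`v ≠ 0`) with no common vertex, give vertex `i` a row `v` with `i ∉ τ v`. The complement of a
simplex `σ` meets every `τ v`, so the rows outside `σ` cannot all be equal, and two distinct nonzero
vectors already span `𝔽₂²`. Finally, shrinking three non-simplices without common vertex to minimal
ones gives (S2): if two of them coincide, it and the third one are disjoint. -/

open Module Submodule

theorem span_singleton_ne_top_of_one_lt_finrank {F V : Type*} [Field F] [AddCommGroup V]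
    [Module F V] (hV : 1 < finrank F V) (v : V) : span F {v} ≠ ⊤ := by
  intro h
  have := finrank_span_le_card (R := F) ({v} : Set V)
  rw [h, finrank_top] at this
  rw [Set.toFinset_singleton, Finset.card_singleton] at this
  omega

theorem ZMod.span_pair_eq_top_of_finrank_eq_two {V : Type*} [AddCommGroup V] [Module (ZMod 2) V]
    (hV : finrank (ZMod 2) V = 2) {v w : V} (hv : v ≠ 0) (hw : w ≠ 0) (hvw : v ≠ w) :
    span (ZMod 2) {v, w} = ⊤ := by
  have hli : LinearIndependent (ZMod 2) ![v, w] := by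
    refine (LinearIndependent.pair_iff' hv).2 fun a => ?_
    fin_cases a
    · show (0 : ZMod 2) • v ≠ w
      simpa using hw.symm
    · show (1 : ZMod 2) • v ≠ w
      simpa using hvw
  simpa [Matrix.range_cons, Set.pair_comm] using hli.span_eq_top_of_card_eq_finrank (by simp [hV])

section

variable {m : ℕ} {K : Set (Finset (Fin m))}

theorem MinimalNonSimplex.nonempty (hK : ∅ ∈ K) {τ : Finset (Fin m)}
    (hτ : MinimalNonSimplex m K τ) : τ.Nonempty :=
  Finset.nonempty_iff_ne_empty.2 fun h => hτ.1 (h ▸ hK)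

theorem exists_minimalNonSimplex_subset {ω : Finset (Fin m)} (hω : ω ∉ K) :
    ∃ τ ⊆ ω, MinimalNonSimplex m K τ := by
  obtain ⟨τ, ⟨hτω, hτK⟩, hmin⟩ :=
    wellFounded_lt.has_min {τ | τ ⊆ ω ∧ τ ∉ K} ⟨ω, subset_rfl, hω⟩
  refine ⟨τ, hτω, hτK, fun σ hστ => ?_⟩
  by_contra hσK
  exact hmin σ ⟨hστ.subset.trans hτω, hσK⟩ hστ

theorem condS2_of_inter_eq_empty (hK : ∅ ∈ K) {τ₁ τ₂ : Finset (Fin m)}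
    (h₁ : MinimalNonSimplex m K τ₁) (h₂ : MinimalNonSimplex m K τ₂) (h : τ₁ ∩ τ₂ = ∅) :
    CondS2 m K := by
  refine Or.inr ⟨τ₁, τ₂, h₁, h₂, fun h₁₂ => ?_, h⟩
  rw [h₁₂, Finset.inter_self] at h
  exact (h₂.nonempty hK).ne_empty h

theorem condS2_of_inter_inter_eq_empty (hK : ∅ ∈ K) {τ₁ τ₂ τ₃ : Finset (Fin m)}
    (h₁ : MinimalNonSimplex m K τ₁) (h₂ : MinimalNonSimplex m K τ₂)
    (h₃ : MinimalNonSimplex m K τ₃) (h : τ₁ ∩ τ₂ ∩ τ₃ = ∅) : CondS2 m K := by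
  by_cases h₁₂ : τ₁ = τ₂
  · subst h₁₂
    exact condS2_of_inter_eq_empty hK h₁ h₃ (by simpa using h)
  by_cases h₁₃ : τ₁ = τ₃
  · subst h₁₃
    rw [Finset.inter_right_comm, Finset.inter_self] at h
    exact condS2_of_inter_eq_empty hK h₁ h₂ h
  by_cases h₂₃ : τ₂ = τ₃
  · subst h₂₃
    exact condS2_of_inter_eq_empty hK h₁ h₂ (by simpa [Finset.inter_assoc] using h)
  exact Or.inl ⟨τ₁, τ₂, τ₃, h₁, h₂, h₃, h₁₂, h₁₃, h₂₃, h⟩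

def HasNonSimplicesWithEmptyInter (ι : Type*) (K : Set (Finset (Fin m))) : Prop :=
  ∃ τ : ι → Finset (Fin m), (∀ j, τ j ∉ K) ∧ ∀ i, ∃ j, i ∉ τ j

theorem HasNonSimplicesWithEmptyInter.congr {ι ι' : Type*} (e : ι ≃ ι') :
    HasNonSimplicesWithEmptyInter ι K ↔ HasNonSimplicesWithEmptyInter ι' K := by
  constructor <;> rintro ⟨τ, hτK, hτ⟩
  · exact ⟨τ ∘ e.symm, fun j => hτK _, fun i => (hτ i).imp' e fun j hj => by simpa using hj⟩
  · exact ⟨τ ∘ e, fun j => hτK _, fun i => (hτ i).imp' e.symm fun j hj => by simpa using hj⟩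

theorem hasNonSimplicesWithEmptyInter_fin_three {τ₁ τ₂ τ₃ : Finset (Fin m)} (h₁ : τ₁ ∉ K)
    (h₂ : τ₂ ∉ K) (h₃ : τ₃ ∉ K) (h : τ₁ ∩ τ₂ ∩ τ₃ = ∅) :
    HasNonSimplicesWithEmptyInter (Fin 3) K := by
  refine ⟨![τ₁, τ₂, τ₃], fun j => by fin_cases j <;> assumption, fun i => ?_⟩
  by_contra! hi
  have : i ∈ τ₁ ∩ τ₂ ∩ τ₃ := by simpa using ⟨hi 0, hi 1, hi 2⟩
  simp [h] at this

theorem condS2_iff_hasNonSimplicesWithEmptyInter (hK : ∅ ∈ K) :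
    CondS2 m K ↔ HasNonSimplicesWithEmptyInter (Fin 3) K := by
  constructor
  · rintro (⟨τ₁, τ₂, τ₃, h₁, h₂, h₃, -, -, -, h⟩ | ⟨τ₁, τ₂, h₁, h₂, -, h⟩)
    · exact hasNonSimplicesWithEmptyInter_fin_three h₁.1 h₂.1 h₃.1 h
    · exact hasNonSimplicesWithEmptyInter_fin_three h₁.1 h₂.1 h₂.1
        (by rwa [Finset.inter_assoc, Finset.inter_self])
  · rintro ⟨τ, hτK, hτ⟩
    choose σ hστ hσ using fun j => exists_minimalNonSimplex_subset (hτK j)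
    refine condS2_of_inter_inter_eq_empty hK (hσ 0) (hσ 1) (hσ 2) ?_
    refine Finset.eq_empty_of_forall_notMem fun i hi => ?_
    simp only [Finset.mem_inter] at hi
    obtain ⟨j, hj⟩ := hτ i
    fin_cases j
    · exact hj (hστ 0 hi.1.1)
    · exact hj (hστ 1 hi.1.2)
    · exact hj (hστ 2 hi.2)

theorem hasNonSimplicesWithEmptyInter_of_condA2 {S : Matrix (Fin m) (Fin 2) (ZMod 2)}
    (hS : CondA2 m 2 K S) :
    HasNonSimplicesWithEmptyInter {v : Fin 2 → ZMod 2 // v ≠ 0} K := by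
  classical
  refine ⟨fun v => {i | S i ≠ 0 ∧ S i ≠ v}, fun v hv => ?_, fun i => ?_⟩
  · refine span_singleton_ne_top_of_one_lt_finrank (F := ZMod 2) (by simp) v.1 ?_
    rw [eq_top_iff, ← hS _ hv, span_le]
    rintro _ ⟨i, hi, rfl⟩
    obtain h | h : S i = 0 ∨ S i = v := by simpa [or_iff_not_imp_left] using hi
    · simp only [h, SetLike.mem_coe, zero_mem]
    · simp only [h, SetLike.mem_coe, mem_span_singleton_self]
  · by_cases h0 : S i = 0
    · obtain ⟨v, hv⟩ := exists_ne (0 : Fin 2 → ZMod 2)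
      exact ⟨⟨v, hv⟩, by simp [h0]⟩
    · exact ⟨⟨S i, h0⟩, by simp⟩

theorem exists_ne_of_forall_not_subset {ι : Type*} [Nonempty ι] {τ : ι → Finset (Fin m)}
    {c : Fin m → ι} (hc : ∀ i, i ∉ τ (c i)) {σ : Finset (Fin m)} (hσ : ∀ j, ¬τ j ⊆ σ) :
    ∃ i₁ ∉ σ, ∃ i₂ ∉ σ, c i₁ ≠ c i₂ := by
  choose x hxτ hxσ using fun j => Finset.not_subset.1 (hσ j)
  by_contra! hsame
  obtain ⟨j⟩ := ‹Nonempty ι›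
  set a := c (x j)
  have hxa : c (x a) = a := hsame _ (hxσ a) _ (hxσ j)
  exact hc (x a) (by rw [hxa]; exact hxτ a)

theorem exists_condA2_of_hasNonSimplicesWithEmptyInter (hK : ∀ σ ∈ K, ∀ τ ⊆ σ, τ ∈ K)
    (h : HasNonSimplicesWithEmptyInter {v : Fin 2 → ZMod 2 // v ≠ 0} K) :
    ∃ S : Matrix (Fin m) (Fin 2) (ZMod 2), CondA2 m 2 K S := by
  obtain ⟨τ, hτK, hτ⟩ := h
  choose c hc using hτ
  have : Nonempty {v : Fin 2 → ZMod 2 // v ≠ 0} := nonempty_subtype.2 (exists_ne 0)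
  refine ⟨fun i => (c i : Fin 2 → ZMod 2), fun σ hσ => ?_⟩
  obtain ⟨i₁, hi₁, i₂, hi₂, hne⟩ :=
    exists_ne_of_forall_not_subset hc fun j hj => hτK j (hK σ hσ _ hj)
  rw [eq_top_iff, ← ZMod.span_pair_eq_top_of_finrank_eq_two (by simp) (c i₁).2 (c i₂).2
    (Subtype.coe_injective.ne hne)]
  exact span_mono (Set.pair_subset ⟨i₁, hi₁, rfl⟩ ⟨i₂, hi₂, rfl⟩)

end

/-- `s_ℝ(K) ≥ 2` iff condition (S2) holds. -/
theorem stmt_11 (m : ℕ) (K : Set (Finset (Fin m))) (hK : IsSimplicialComplex m K) :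
    (∃ S : Matrix (Fin m) (Fin 2) (ZMod 2), CondA2 m 2 K S) ↔ CondS2 m K := by
  have e : Fin 3 ≃ {v : Fin 2 → ZMod 2 // v ≠ 0} := (Fintype.equivFinOfCardEq (by decide)).symm
  rw [condS2_iff_hasNonSimplicesWithEmptyInter hK.1, HasNonSimplicesWithEmptyInter.congr e]
  exact ⟨fun ⟨S, hS⟩ => hasNonSimplicesWithEmptyInter_of_condA2 hS,
    exists_condA2_of_hasNonSimplicesWithEmptyInter hK.2⟩
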